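/- arXiv:1509.08279 — 5 statements merged into one kernel-verified Lean document; each statement's English description precedes it below -/
import Mathlib

section
/- Let a3, a4, b, c be natural numbers satisfying 2b = 3·a3 + 4·a4, a3 + a4 − b + c = 2, c·(c−1) = 4·a4 + 2·b, and c ≥ 4. Then (a3, a4, b, c) is one of (4, 0, 6, 4), (4, 1, 8, 5), (2, 3, 9, 6). -/
/-- Counting argument classifying asymmetric three-dimensional jammed fans:
`a3` rays of valence 3, `a4` rays of valence 4, `b` two-dimensional cones,
`c` three-dimensional cones. -/
theorem stmt_0 (a3 a4 b c : ℕ)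
    (h1 : 2 * b = 3 * a3 + 4 * a4)
    (h2 : (a3 : ℤ) + a4 - b + c = 2)
    (h3 : (c : ℤ) * (c - 1) = 4 * a4 + 2 * b)
    (h4 : 4 ≤ c) :
    (a3, a4, b, c) = (4, 0, 6, 4) ∨ (a3, a4, b, c) = (4, 1, 8, 5) ∨
      (a3, a4, b, c) = (2, 3, 9, 6) := by
  have h1' : 2 * (b : ℤ) = 3 * a3 + 4 * a4 := by exact_mod_cast h1
  have ha3 : (0:ℤ) ≤ (a3:ℤ) := by positivity
  have hc4 : (4:ℤ) ≤ (c:ℤ) := by exact_mod_cast h4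
  have h6 : (c:ℤ) ≤ 6 := by nlinarith
  have hc6 : c ≤ 6 := by exact_mod_cast h6
  interval_cases c <;>
    · push_cast at h2 h3
      simp only [Prod.mk.injEq]
      norm_num
      omega
end

section
/- Let a3, a4, b, c be natural numbers satisfying 2b = 3·a3 + 4·a4, a3 + a4 − b + c = 2, c·(c−1) = 4·a4 + 2·b + c, c even, and c ≥ 6. Then (a3, a4, b, c) is one of (0, 6, 12, 8) and (8, 0, 12, 6). -/
/-- Counting argument classifying centrally symmetric three-dimensional jammed fans. -/
theorem stmt_3 (a3 a4 b c : ℕ)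
    (h1 : 2 * b = 3 * a3 + 4 * a4)
    (h2 : (a3 : ℤ) + a4 - b + c = 2)
    (h3 : (c : ℤ) * (c - 1) = 4 * a4 + 2 * b + c)
    (heven : Even c) (h6 : 6 ≤ c) :
    (a3, a4, b, c) = (0, 6, 12, 8) ∨ (a3, a4, b, c) = (8, 0, 12, 6) := by
  have h1' : (2 : ℤ) * b = 3 * a3 + 4 * a4 := by exact_mod_cast h1
  have ha3 : (0:ℤ) ≤ a3 := Int.natCast_nonneg _
  have ha4 : (0:ℤ) ≤ a4 := Int.natCast_nonneg _
  have h6' : (6:ℤ) ≤ c := by exact_mod_cast h6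
  have hc8 : (c:ℤ) ≤ 8 := by nlinarith
  have hc8' : c ≤ 8 := by exact_mod_cast hc8
  obtain ⟨k, hk⟩ := heven
  have hc : c = 6 ∨ c = 8 := by omega
  simp only [Prod.mk.injEq]
  rcases hc with rfl | rfl <;> [right; left] <;>
    · push_cast at h2 h3
      omega
end

section
/- Let K ⊆ ℝⁿ be a convex set and T ⊆ ℝⁿ a set of translation vectors such that for any two distinct s, t ∈ T the interiors of K + s and K + t are disjoint. Then for any two distinct s, t ∈ T the interiors of K* + s and K* + t are disjoint, where K* = (1/2)·(K + (−K)) is the Minkowski symmetrization of K. -/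
open Pointwise

section Aux

variable {n : ℕ}

local notation "E" => EuclideanSpace ℝ (Fin n)

/-- If the symmetrization has nonempty interior, so does `K`. -/
lemma aux_int_nonempty {K : Set (EuclideanSpace ℝ (Fin n))} (hK : Convex ℝ K)
    (hne : (interior ((1 / 2 : ℝ) • (K + -K))).Nonempty) : (interior K).Nonempty := by
  obtain ⟨x, hx⟩ := hne
  -- K is nonempty
  have hxmem : x ∈ (1 / 2 : ℝ) • (K + -K) := interior_subset hx
  obtain ⟨w, hw, rfl⟩ := hxmem
  obtain ⟨a, ha, b, hb, rfl⟩ := hw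
  rw [Set.mem_neg] at hb
  have hKne : K.Nonempty := ⟨a, ha⟩
  -- the symmetrization is contained in the vector span of K
  have hsub : (1 / 2 : ℝ) • (K + -K) ⊆ (vectorSpan ℝ K : Set (EuclideanSpace ℝ (Fin n))) := by
    rintro _ ⟨w, hw, rfl⟩
    obtain ⟨u, hu, v, hv, rfl⟩ := hw
    rw [Set.mem_neg] at hv
    have : u - (-v) ∈ vectorSpan ℝ K := vsub_mem_vectorSpan ℝ hu hv
    simpa [sub_neg_eq_add] using (vectorSpan ℝ K).smul_mem (1/2 : ℝ) this
  have hvs : vectorSpan ℝ K = ⊤ := by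
    refine Submodule.eq_top_of_nonempty_interior' _ ?_
    exact ⟨_, interior_mono hsub hx⟩
  have hspan : affineSpan ℝ K = ⊤ := by
    have := (AffineSubspace.direction_eq_top_iff_of_nonempty
      (s := affineSpan ℝ K) ((affineSpan_nonempty ℝ).2 hKne)).1
    rw [direction_affineSpan] at this
    exact this hvs
  exact hK.interior_nonempty_iff_affineSpan_eq_top.2 hspan

end Aux

/-- Danzer–Grünbaum symmetrization lemma: if the translates of a convex set `K ⊆ ℝⁿ` by the
vectors of `T` have pairwise disjoint interiors, then so do the corresponding translates of
the Minkowski symmetrization `(1/2) • (K + (-K))`. -/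
theorem stmt_6 {n : ℕ} (K : Set (EuclideanSpace ℝ (Fin n))) (hK : Convex ℝ K)
    (T : Set (EuclideanSpace ℝ (Fin n)))
    (h : ∀ s ∈ T, ∀ t ∈ T, s ≠ t → Disjoint (interior (s +ᵥ K)) (interior (t +ᵥ K))) :
    ∀ s ∈ T, ∀ t ∈ T, s ≠ t →
      Disjoint (interior (s +ᵥ ((1 / 2 : ℝ) • (K + -K))))
        (interior (t +ᵥ ((1 / 2 : ℝ) • (K + -K)))) := by
  intro s hs t ht hst
  by_contra hcon
  rw [Set.not_disjoint_iff] at hcon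
  obtain ⟨x, hxs, hxt⟩ := hcon
  set Ks : Set (EuclideanSpace ℝ (Fin n)) := (1 / 2 : ℝ) • (K + -K) with hKs
  -- interior of Ks is nonempty, hence interior of K is nonempty
  have hKsint : (interior Ks).Nonempty := by
    have : interior (s +ᵥ Ks) = s +ᵥ interior Ks := interior_vadd s Ks
    rw [this] at hxs
    obtain ⟨y, hy, -⟩ := hxs
    exact ⟨y, hy⟩
  obtain ⟨k₀, hk₀⟩ := aux_int_nonempty hK hKsint
  -- x ∈ s +ᵥ Ks : write it out
  have hxs' : x ∈ s +ᵥ Ks := interior_subset hxs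
  obtain ⟨z, hz, rfl⟩ := hxs'
  obtain ⟨w, hw, rfl⟩ := hz
  obtain ⟨a, ha, b', hb', rfl⟩ := hw
  rw [Set.mem_neg] at hb'
  set b : EuclideanSpace ℝ (Fin n) := -b' with hbdef
  -- the point x is s + (a - b')/... ; define the perturbed point
  set x₀ : EuclideanSpace ℝ (Fin n) := s +ᵥ (1/2 : ℝ) • (a + b') with hx₀
  -- interior (t +ᵥ Ks) is open, containing x₀; pick θ small
  have hopen : IsOpen (interior (t +ᵥ Ks)) := isOpen_interior
  obtain ⟨ε, hε, hball⟩ := Metric.isOpen_iff.1 hopen x₀ hxt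
  -- choose θ ∈ (0,1)
  obtain ⟨θ, hθ0, hθ1, hθsmall⟩ : ∃ θ : ℝ, 0 < θ ∧ θ < 1 ∧ θ * dist x₀ s < ε := by
    rcases lt_or_ge (dist x₀ s) 1 with hd | hd
    · obtain ⟨θ, hθ0, hθ1⟩ := exists_between (lt_min one_pos hε)
      refine ⟨θ, hθ0, lt_of_lt_of_le hθ1 (min_le_left _ _), ?_⟩
      calc θ * dist x₀ s ≤ θ * 1 := by
            exact mul_le_mul_of_nonneg_left hd.le hθ0.le
        _ = θ := mul_one θ
        _ < ε := lt_of_lt_of_le hθ1 (min_le_right _ _)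
    · have hdpos : (0:ℝ) < dist x₀ s := lt_of_lt_of_le one_pos hd
      obtain ⟨θ, hθ0, hθ1⟩ := exists_between (lt_min one_pos (div_pos hε hdpos))
      refine ⟨θ, hθ0, lt_of_lt_of_le hθ1 (min_le_left _ _), ?_⟩
      have : θ < ε / dist x₀ s := lt_of_lt_of_le hθ1 (min_le_right _ _)
      calc θ * dist x₀ s < (ε / dist x₀ s) * dist x₀ s := by
            exact mul_lt_mul_of_pos_right this hdpos
        _ = ε := div_mul_cancel₀ ε hdpos.ne'
  -- the perturbed point
  set xθ : EuclideanSpace ℝ (Fin n) := (1 - θ) • x₀ + θ • s with hxθ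
  have hdist : dist xθ x₀ < ε := by
    have : xθ - x₀ = θ • (s - x₀) := by
      rw [hxθ]; module
    rw [dist_eq_norm, this, norm_smul]
    simpa [Real.norm_eq_abs, abs_of_pos hθ0, dist_eq_norm, norm_sub_rev] using hθsmall
  have hxθt : xθ ∈ t +ᵥ Ks := interior_subset (hball hdist)
  -- write xθ relative to t
  obtain ⟨z2, hz2, hz2eq⟩ := hxθt
  obtain ⟨w2, hw2, rfl⟩ := hz2
  obtain ⟨c, hc, d', hd', rfl⟩ := hw2
  rw [Set.mem_neg] at hd'
  -- perturbed elements of K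
  set a' : EuclideanSpace ℝ (Fin n) := (1 - θ) • a + θ • k₀ with ha'
  set b1 : EuclideanSpace ℝ (Fin n) := (1 - θ) • (-b') + θ • k₀ with hb1
  have ha'int : a' ∈ interior K :=
    hK.combo_self_interior_mem_interior ha hk₀ (by linarith) hθ0 (by ring)
  have hb1int : b1 ∈ interior K :=
    hK.combo_self_interior_mem_interior hb' hk₀ (by linarith) hθ0 (by ring)
  -- xθ = s + (a' - b1)/2  and  xθ = t + (c - (-d'))/2
  have hxθs : xθ = s + (1/2 : ℝ) • (a' - b1) := by
    rw [hxθ, hx₀, ha', hb1]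
    simp only [vadd_eq_add]
    module
  -- the common point
  set p : EuclideanSpace ℝ (Fin n) := xθ + (1/2 : ℝ) • (b1 + (-d')) with hp
  have hps : p = s + (1/2 : ℝ) • (a' + (-d')) := by
    rw [hp, hxθs]; module
  have hpt : p = t + (1/2 : ℝ) • (c + b1) := by
    rw [hp, ← hz2eq]
    simp only [vadd_eq_add]
    module
  have hd'K : -d' ∈ K := hd'
  have hmid1 : (1/2 : ℝ) • (a' + (-d')) ∈ interior K := by
    have := hK.combo_interior_self_mem_interior ha'int hd'K
      (by norm_num : (0:ℝ) < 1/2) (by norm_num : (0:ℝ) ≤ 1/2) (by norm_num)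
    simpa [smul_add] using this
  have hmid2 : (1/2 : ℝ) • (c + b1) ∈ interior K := by
    have := hK.combo_self_interior_mem_interior hc hb1int
      (by norm_num : (0:ℝ) ≤ 1/2) (by norm_num : (0:ℝ) < 1/2) (by norm_num)
    simpa [smul_add] using this
  -- p belongs to both interiors
  have hps' : p ∈ interior (s +ᵥ K) := by
    rw [interior_vadd]
    exact ⟨_, hmid1, by rw [hps]; simp [vadd_eq_add]⟩
  have hpt' : p ∈ interior (t +ᵥ K) := by
    rw [interior_vadd]
    exact ⟨_, hmid2, by rw [hpt]; simp [vadd_eq_add]⟩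
  exact Set.disjoint_left.1 (h s hs t ht hst) hps' hpt'
end

section
/- Let D = conv{0, e₁, e₂, e₃} ⊆ ℝ³ be the standard tetrahedron, where e₁, e₂, e₃ is the standard basis. Then the Lebesgue volume of the difference body D + (−D) equals 10/3 (that is, 20 times the volume of D). -/
open Pointwise MeasureTheory

/-- The standard basis vector `eᵢ` of `ℝ³`. -/
noncomputable def stdVec (i : Fin 3) : EuclideanSpace ℝ (Fin 3) :=
  EuclideanSpace.single i (1 : ℝ)

/-- The standard tetrahedron `conv {0, e₁, e₂, e₃} ⊆ ℝ³`. -/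
noncomputable def stdTetrahedron : Set (EuclideanSpace ℝ (Fin 3)) :=
  convexHull ℝ {0, stdVec 0, stdVec 1, stdVec 2}

/-
The tetrahedron is `D = {z | z ≥ 0, ∑ zᵢ ≤ 1}`. With `K(r, s) = {z | ∑ zᵢ⁺ ≤ r, ∑ zᵢ⁻ ≤ s}`
one has `D = K(1, 0)` and, writing `z = z⁺ - z⁻`, `D - D = K(1, 1)`. Slicing `Kₙ₊₁(r, s) ⊆ ℝ × ℝⁿ`
at the first coordinate `a` gives `Kₙ(r - a⁺, s - a⁻)`, so by Fubini
`|Kₙ₊₁(r, s)| = ∫₀ʳ |Kₙ(t, s)| dt + ∫₀ˢ |Kₙ(r, t)| dt`. From `|K₁(r, s)| = r + s` this gives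
`|K₃(r, s)| = r³/6 + 3r²s/2 + 3rs²/2 + s³/6`, which is `1/6` for `D` and `10/3` for `D - D`.
-/

open Set

def posNegBody (ι : Type*) [Fintype ι] (r s : ℝ) : Set (EuclideanSpace ℝ ι) :=
  {z | ∑ i, (z i)⁺ ≤ r ∧ ∑ i, (z i)⁻ ≤ s}

section posNegBody
variable {ι : Type*} [Fintype ι]

lemma mem_posNegBody_zero {r : ℝ} {z : EuclideanSpace ℝ ι} :
    z ∈ posNegBody ι r 0 ↔ (∀ i, 0 ≤ z i) ∧ ∑ i, z i ≤ r := by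
  constructor
  · rintro ⟨hpos, hneg⟩
    have hz i : 0 ≤ z i := by
      have := Finset.single_le_sum (fun j _ ↦ negPart_nonneg (z j)) (Finset.mem_univ i)
      exact negPart_eq_zero.1 (le_antisymm (this.trans hneg) (negPart_nonneg _))
    refine ⟨hz, ?_⟩
    simpa only [posPart_eq_self.2 (hz _)] using hpos
  · rintro ⟨hz, hsum⟩
    simp only [posNegBody, mem_ofPred_eq, posPart_eq_self.2 (hz _), negPart_eq_zero.2 (hz _)]
    simpa using hsum

lemma convex_posNegBody_zero (r : ℝ) : Convex ℝ (posNegBody ι r 0) := by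
  intro x hx y hy a b ha hb hab
  rw [mem_posNegBody_zero] at hx hy ⊢
  refine ⟨fun i ↦ ?_, ?_⟩
  · simp only [PiLp.add_apply, PiLp.smul_apply, smul_eq_mul]
    nlinarith [hx.1 i, hy.1 i]
  · simp only [PiLp.add_apply, PiLp.smul_apply, smul_eq_mul, Finset.sum_add_distrib,
      ← Finset.mul_sum]
    have hr : a * r + b * r = r := by rw [← add_mul, hab, one_mul]
    linarith [mul_le_mul_of_nonneg_left hx.2 ha, mul_le_mul_of_nonneg_left hy.2 hb]

lemma posNegBody_zero_add_neg (r s : ℝ) :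
    posNegBody ι r 0 + -posNegBody ι s 0 = posNegBody ι r s := by
  ext z
  constructor
  · rintro ⟨x, hx, y, hy, rfl⟩
    rw [mem_neg, mem_posNegBody_zero] at hy
    rw [mem_posNegBody_zero] at hx
    refine ⟨(Finset.sum_le_sum fun i _ ↦ ?_).trans hx.2,
      (Finset.sum_le_sum fun i _ ↦ ?_).trans hy.2⟩
    · have := hy.1 i
      simp only [PiLp.neg_apply, PiLp.add_apply] at this ⊢
      exact sup_le (by linarith) (hx.1 i)
    · have := hx.1 i
      simp only [PiLp.neg_apply, PiLp.add_apply] at hy ⊢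
      exact sup_le (by linarith) (hy.1 i)
  · rintro ⟨hpos, hneg⟩
    refine ⟨WithLp.toLp 2 fun i ↦ (z i)⁺, ?_, WithLp.toLp 2 fun i ↦ -(z i)⁻, ?_, ?_⟩
    · rw [mem_posNegBody_zero]
      exact ⟨fun i ↦ posPart_nonneg _, hpos⟩
    · rw [mem_neg, mem_posNegBody_zero]
      exact ⟨fun i ↦ by simp, by simpa using hneg⟩
    · ext i
      simp [← sub_eq_add_neg]

end posNegBody

lemma stdTetrahedron_eq_posNegBody : stdTetrahedron = posNegBody (Fin 3) 1 0 := by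
  refine (convexHull_min ?_ (convex_posNegBody_zero 1)).antisymm fun z hz ↦ ?_
  · simp only [insert_subset_iff, singleton_subset_iff, mem_posNegBody_zero, stdVec]
    simp [Fin.forall_fin_succ]
  · rw [mem_posNegBody_zero, Fin.sum_univ_three] at hz
    obtain ⟨hz₀, hsum⟩ := hz
    have hmem := (convex_convexHull ℝ ({0, stdVec 0, stdVec 1, stdVec 2} : Set _)).sum_mem
      (t := Finset.univ) (w := ![1 - (z 0 + z 1 + z 2), z 0, z 1, z 2])
      (z := ![0, stdVec 0, stdVec 1, stdVec 2])
      (fun i _ ↦ by fin_cases i <;> simp [hz₀, hsum])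
      (by simp [Fin.sum_univ_four]; ring)
      (fun i _ ↦ subset_convexHull ℝ _ (by fin_cases i <;> simp))
    convert hmem
    ext j
    fin_cases j <;> simp [Fin.sum_univ_four, stdVec]

section
variable {X : Type*} {p q : X → ℝ} {f : ℝ → ℝ → ℝ} {r s : ℝ}

lemma preimage_mk_posNeg_le (a : ℝ) :
    Prod.mk a ⁻¹' {z : ℝ × X | z.1⁺ + p z.2 ≤ r ∧ z.1⁻ + q z.2 ≤ s} =
      {x | p x ≤ r - a⁺ ∧ q x ≤ s - a⁻} := by
  ext x
  simp only [mem_preimage, mem_ofPred_eq, le_sub_iff_add_le']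

variable [MeasureSpace X]

lemma volume_preimage_mk_posNeg_le (hp : ∀ x, 0 ≤ p x) (hq : ∀ x, 0 ≤ q x)
    (hvol : ∀ r s, 0 ≤ r → 0 ≤ s → volume {x | p x ≤ r ∧ q x ≤ s} = ENNReal.ofReal (f r s))
    (hr : 0 ≤ r) (hs : 0 ≤ s) (a : ℝ) :
    volume (Prod.mk a ⁻¹' {z : ℝ × X | z.1⁺ + p z.2 ≤ r ∧ z.1⁻ + q z.2 ≤ s}) =
      (Icc (-s) r).indicator (fun a ↦ ENNReal.ofReal (f (r - a⁺) (s - a⁻))) a := by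
  rw [preimage_mk_posNeg_le]
  by_cases ha : a ∈ Icc (-s) r
  · rw [indicator_of_mem ha]
    exact hvol _ _ (sub_nonneg.2 (sup_le ha.2 hr)) (sub_nonneg.2 (sup_le (neg_le.1 ha.1) hs))
  · rw [indicator_of_notMem ha, measure_eq_zero_iff_ae_notMem]
    refine Filter.Eventually.of_forall fun x ⟨hpx, hqx⟩ ↦ ha ⟨?_, ?_⟩
    · linarith [neg_le_negPart a, hq x]
    · linarith [le_posPart a, hp x]

variable [SFinite (volume : Measure X)]

lemma volume_prod_posNeg_le (hpm : Measurable p) (hqm : Measurable q)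
    (hp : ∀ x, 0 ≤ p x) (hq : ∀ x, 0 ≤ q x) (hf : Continuous (Function.uncurry f))
    (hf₀ : ∀ r s, 0 ≤ r → 0 ≤ s → 0 ≤ f r s)
    (hvol : ∀ r s, 0 ≤ r → 0 ≤ s → volume {x | p x ≤ r ∧ q x ≤ s} = ENNReal.ofReal (f r s))
    (hr : 0 ≤ r) (hs : 0 ≤ s) :
    volume {z : ℝ × X | z.1⁺ + p z.2 ≤ r ∧ z.1⁻ + q z.2 ≤ s} =
      ENNReal.ofReal ((∫ t in 0..r, f t s) + ∫ t in 0..s, f r t) := by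
  set g : ℝ → ℝ := fun a ↦ f (r - a⁺) (s - a⁻)
  have hS : MeasurableSet ({z : ℝ × X | z.1⁺ + p z.2 ≤ r} ∩ {z | z.1⁻ + q z.2 ≤ s}) :=
    (measurableSet_le (by fun_prop) measurable_const).inter
      (measurableSet_le (by fun_prop) measurable_const)
  have hg : Continuous g := hf.comp (by fun_prop : Continuous fun a : ℝ ↦ (r - a⁺, s - a⁻))
  have hg₀ : 0 ≤ᵐ[volume.restrict (Icc (-s) r)] g := by
    refine (ae_restrict_mem measurableSet_Icc).mono fun a ha ↦ hf₀ _ _ ?_ ?_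
    · exact sub_nonneg.2 (sup_le ha.2 hr)
    · exact sub_nonneg.2 (sup_le (neg_le.1 ha.1) hs)
  have hneg : ∫ a in -s..0, g a = ∫ t in 0..s, f r t := by
    rw [intervalIntegral.integral_congr (g := fun a ↦ f r (s + a)),
      intervalIntegral.integral_comp_add_left (fun t ↦ f r t), add_neg_cancel, add_zero]
    intro a ha
    rw [uIcc_of_le (by linarith)] at ha
    simp [g, posPart_eq_zero.2 ha.2, negPart_eq_neg.2 ha.2, sub_neg_eq_add]
  have hpos : ∫ a in 0..r, g a = ∫ t in 0..r, f t s := by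
    rw [intervalIntegral.integral_congr (g := fun a ↦ f (r - a) s),
      intervalIntegral.integral_comp_sub_left (fun t ↦ f t s), sub_self, sub_zero]
    intro a ha
    rw [uIcc_of_le hr] at ha
    simp [g, posPart_eq_self.2 ha.1, negPart_eq_zero.2 ha.1]
  calc volume {z : ℝ × X | z.1⁺ + p z.2 ≤ r ∧ z.1⁻ + q z.2 ≤ s}
      = ∫⁻ a, volume (Prod.mk a ⁻¹' {z : ℝ × X | z.1⁺ + p z.2 ≤ r ∧ z.1⁻ + q z.2 ≤ s}) := by
        rw [Measure.volume_eq_prod]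
        exact Measure.prod_apply hS
    _ = ∫⁻ a in Icc (-s) r, ENNReal.ofReal (g a) := by
        simp_rw [volume_preimage_mk_posNeg_le hp hq hvol hr hs]
        exact lintegral_indicator measurableSet_Icc _
    _ = ENNReal.ofReal (∫ a in -s..r, g a) := by
        rw [← ofReal_integral_eq_lintegral_ofReal hg.integrableOn_Icc hg₀,
          integral_Icc_eq_integral_Ioc, intervalIntegral.integral_of_le (by linarith)]
    _ = _ := by
        rw [← intervalIntegral.integral_add_adjacent_intervals (b := 0)
          (hg.intervalIntegrable _ _) (hg.intervalIntegrable _ _), hneg, hpos, add_comm]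

end

lemma integral_eq_of_quadratic {g : ℝ → ℝ} (a b c : ℝ) (hg : ∀ t, g t = a * t ^ 2 + b * t + c)
    (x : ℝ) : ∫ t in 0..x, g t = a * x ^ 3 / 3 + b * x ^ 2 / 2 + c * x := by
  have hi {h : ℝ → ℝ} (hh : Continuous h) : IntervalIntegrable h volume 0 x :=
    hh.intervalIntegrable 0 x
  simp only [hg]
  rw [intervalIntegral.integral_add (hi (by fun_prop)) (hi (by fun_prop)),
    intervalIntegral.integral_add (hi (by fun_prop)) (hi (by fun_prop)),
    intervalIntegral.integral_const_mul, intervalIntegral.integral_const_mul, integral_pow,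
    integral_id, intervalIntegral.integral_const]
  simp
  ring

lemma setOf_posPart_le_negPart_le {r s : ℝ} (hr : 0 ≤ r) (hs : 0 ≤ s) :
    {x : ℝ | x⁺ ≤ r ∧ x⁻ ≤ s} = Icc (-s) r := by
  ext x
  simp only [mem_ofPred_eq, mem_Icc, posPart, negPart, sup_le_iff, hr, hs, and_true, neg_le]
  exact and_comm

lemma volume_posPart_negPart_le {r s : ℝ} (hr : 0 ≤ r) (hs : 0 ≤ s) :
    volume {x : ℝ | x⁺ ≤ r ∧ x⁻ ≤ s} = ENNReal.ofReal (r + s) := by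
  rw [setOf_posPart_le_negPart_le hr hs, Real.volume_Icc, sub_neg_eq_add]

lemma volume_posPart_negPart_le_prod {r s : ℝ} (hr : 0 ≤ r) (hs : 0 ≤ s) :
    volume {z : ℝ × ℝ | z.1⁺ + z.2⁺ ≤ r ∧ z.1⁻ + z.2⁻ ≤ s} =
      ENNReal.ofReal (r ^ 2 / 2 + 2 * r * s + s ^ 2 / 2) := by
  rw [volume_prod_posNeg_le (f := fun r s ↦ r + s) (by fun_prop) (by fun_prop) posPart_nonneg
    negPart_nonneg (by fun_prop) (fun r s hr hs ↦ by positivity)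
    (fun r s hr hs ↦ volume_posPart_negPart_le hr hs) hr hs,
    integral_eq_of_quadratic 0 1 s (fun t ↦ by ring),
    integral_eq_of_quadratic 0 1 r (fun t ↦ by ring)]
  ring_nf

lemma volume_posPart_negPart_le_prod_prod {r s : ℝ} (hr : 0 ≤ r) (hs : 0 ≤ s) :
    volume {z : ℝ × ℝ × ℝ | z.1⁺ + (z.2.1⁺ + z.2.2⁺) ≤ r ∧ z.1⁻ + (z.2.1⁻ + z.2.2⁻) ≤ s} =
      ENNReal.ofReal (r ^ 3 / 6 + 3 / 2 * r ^ 2 * s + 3 / 2 * r * s ^ 2 + s ^ 3 / 6) := by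
  rw [volume_prod_posNeg_le (f := fun r s ↦ r ^ 2 / 2 + 2 * r * s + s ^ 2 / 2) (by fun_prop)
    (by fun_prop) (fun _ ↦ by positivity) (fun _ ↦ by positivity) (by fun_prop)
    (fun r s hr hs ↦ by positivity) (fun r s hr hs ↦ volume_posPart_negPart_le_prod hr hs) hr hs,
    integral_eq_of_quadratic (1 / 2) (2 * s) (s ^ 2 / 2) (fun t ↦ by ring),
    integral_eq_of_quadratic (1 / 2) (2 * r) (r ^ 2 / 2) (fun t ↦ by ring)]
  ring_nf

noncomputable def EuclideanSpace.measurableEquivProdProd :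
    EuclideanSpace ℝ (Fin 3) ≃ᵐ ℝ × ℝ × ℝ :=
  (MeasurableEquiv.toLp 2 (Fin 3 → ℝ)).symm.trans <|
    (MeasurableEquiv.piFinSuccAbove (fun _ ↦ ℝ) 0).trans <|
      MeasurableEquiv.prodCongr (.refl ℝ) MeasurableEquiv.finTwoArrow

lemma EuclideanSpace.measurableEquivProdProd_apply (z : EuclideanSpace ℝ (Fin 3)) :
    measurableEquivProdProd z = (z 0, z 1, z 2) :=
  rfl

lemma EuclideanSpace.volume_preserving_measurableEquivProdProd :
    MeasurePreserving measurableEquivProdProd :=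
  (((MeasurePreserving.id volume).prod (volume_preserving_finTwoArrow ℝ)).comp
    (volume_preserving_piFinSuccAbove (fun _ ↦ ℝ) 0)).comp
    (EuclideanSpace.volume_preserving_symm_measurableEquiv_toLp (Fin 3))

lemma volume_posNegBody_fin_three {r s : ℝ} (hr : 0 ≤ r) (hs : 0 ≤ s) :
    volume (posNegBody (Fin 3) r s) =
      ENNReal.ofReal (r ^ 3 / 6 + 3 / 2 * r ^ 2 * s + 3 / 2 * r * s ^ 2 + s ^ 3 / 6) := by
  have : posNegBody (Fin 3) r s = EuclideanSpace.measurableEquivProdProd ⁻¹'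
      {z : ℝ × ℝ × ℝ | z.1⁺ + (z.2.1⁺ + z.2.2⁺) ≤ r ∧ z.1⁻ + (z.2.1⁻ + z.2.2⁻) ≤ s} := by
    ext z
    simp [posNegBody, EuclideanSpace.measurableEquivProdProd_apply, Fin.sum_univ_three, add_assoc]
  rw [this, EuclideanSpace.volume_preserving_measurableEquivProdProd.measure_preimage_equiv,
    volume_posPart_negPart_le_prod_prod hr hs]

/-- The volume of the difference body of the standard tetrahedron `D` is `10/3`,
that is, `20` times the volume of `D`. -/
theorem stmt_9 :
    volume (stdTetrahedron + -stdTetrahedron) = 10 / 3 ∧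
      volume (stdTetrahedron + -stdTetrahedron) = 20 * volume stdTetrahedron := by
  have hD : volume stdTetrahedron = ENNReal.ofReal (1 / 6) := by
    rw [stdTetrahedron_eq_posNegBody, volume_posNegBody_fin_three zero_le_one le_rfl]
    norm_num
  have hDD : volume (stdTetrahedron + -stdTetrahedron) = ENNReal.ofReal (10 / 3) := by
    rw [stdTetrahedron_eq_posNegBody, posNegBody_zero_add_neg,
      volume_posNegBody_fin_three zero_le_one zero_le_one]
    norm_num
  refine ⟨by rw [hDD, ENNReal.ofReal_div_of_pos (by norm_num)]; norm_num, ?_⟩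
  rw [hDD, hD, ← ENNReal.ofReal_ofNat 20, ← ENNReal.ofReal_mul (by norm_num)]
  norm_num
end

section
/- Let D = conv{0, e₁, e₂, e₃} ⊆ ℝ³ be the standard tetrahedron and let Λ' be a full-rank lattice in ℝ³ containing ℤ³ such that for any two distinct vectors s, t ∈ Λ' the interiors of D + s and D + t are disjoint. Then the index [Λ' : ℤ³] is at most 2. -/
/-!
If some coordinate of `v ∈ Λ'` is not a half-integer, `v` can be rounded to an integer point `z`
with `∑ (v - z)ᵢ⁺ < 1` and `∑ (v - z)ᵢ⁻ < 1`: after sorting the fractional parts of `v`, rounding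
up the largest `k` of them works for some `k ≤ 3` unless all three equal `1/2`. Then the point `y`
with `yᵢ = (v - z)ᵢ⁺ + δ` lies in the interiors of both `D` and `(v - z) + D`, although `v - z` is
a nonzero vector of `Λ'`. So every `v ∈ Λ' \ ℤ³` lies in `(1/2, 1/2, 1/2) + ℤ³`, any two such
vectors differ by an element of `ℤ³`, and `ℤ³` has index at most `2` in `Λ'`.
-/

open Pointwise MeasureTheory

/-- The standard integer lattice `ℤ³ ⊆ ℝ³`, i.e. the `ℤ`-span of the standard basis. -/
noncomputable def intLattice : Submodule ℤ (EuclideanSpace ℝ (Fin 3)) :=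
  Submodule.span ℤ (Set.range stdVec)

local notation "ℝ³" => EuclideanSpace ℝ (Fin 3)

lemma stdVec_eq_basisFun : stdVec = EuclideanSpace.basisFun (Fin 3) ℝ := by
  ext i : 1
  simp [stdVec]

lemma mem_intLattice_iff (x : ℝ³) : x ∈ intLattice ↔ ∀ i, ∃ n : ℤ, x i = n := by
  rw [intLattice, stdVec_eq_basisFun, ← OrthonormalBasis.coe_toBasis,
    Module.Basis.mem_span_iff_repr_mem]
  simp [eq_comm]

lemma sum_smul_stdVec (x : ℝ³) : ∑ i, x i • stdVec i = x := by
  simpa [stdVec_eq_basisFun] using (EuclideanSpace.basisFun (Fin 3) ℝ).toBasis.sum_repr x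

lemma mem_stdTetrahedron_of_nonneg {x : ℝ³} (h0 : ∀ i, 0 ≤ x i) (h1 : ∑ i, x i ≤ 1) :
    x ∈ stdTetrahedron := by
  have hx : ∑ i : Fin 4, (Fin.cons (1 - ∑ i, x i) (⇑x) : Fin 4 → ℝ) i •
      (Fin.cons 0 stdVec : Fin 4 → ℝ³) i = x := by
    rw [Fin.sum_univ_succ]
    simp [sum_smul_stdVec]
  rw [← hx]
  refine (convex_convexHull ℝ _).sum_mem (fun i _ => ?_) ?_ (fun i _ => subset_convexHull ℝ _ ?_)
  · cases i using Fin.cases <;> simp [h0, h1]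
  · simp [Fin.sum_univ_succ]
  · cases i using Fin.cases with
    | zero => simp
    | succ j => simp only [Fin.cons_succ]; fin_cases j <;> simp

lemma mem_interior_stdTetrahedron {x : ℝ³} (h0 : ∀ i, 0 < x i) (h1 : ∑ i, x i < 1) :
    x ∈ interior stdTetrahedron := by
  rw [mem_interior_iff_mem_nhds]
  have hcoord : ∀ᶠ y in nhds x, ∀ i, 0 < (y : ℝ³) i := Filter.eventually_all.2 fun i =>
    ((show Continuous fun y : ℝ³ => y i by fun_prop).tendsto x).eventually_const_lt (h0 i)
  have hsum : ∀ᶠ y in nhds x, ∑ i, (y : ℝ³) i < 1 :=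
    ((show Continuous fun y : ℝ³ => ∑ i, y i by fun_prop).tendsto x).eventually_lt_const h1
  filter_upwards [hcoord, hsum] with y hy hys
  exact mem_stdTetrahedron_of_nonneg (fun i => (hy i).le) hys.le

lemma not_disjoint_interior_stdTetrahedron_vadd {v : ℝ³} (hpos : ∑ i, (v i)⁺ < 1)
    (hneg : ∑ i, (v i)⁻ < 1) :
    ¬Disjoint (interior stdTetrahedron) (interior (v +ᵥ stdTetrahedron)) := by
  set δ := (1 - max (∑ i, (v i)⁺) (∑ i, (v i)⁻)) / 6 with hδ_def
  have hδ : 0 < δ := by have := max_lt hpos hneg; positivity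
  have hδpos : ∑ i, (v i)⁺ + 3 * δ < 1 := by
    have := le_max_left (∑ i, (v i)⁺) (∑ i, (v i)⁻); linarith
  have hδneg : ∑ i, (v i)⁻ + 3 * δ < 1 := by
    have := le_max_right (∑ i, (v i)⁺) (∑ i, (v i)⁻); linarith
  set y : ℝ³ := WithLp.toLp 2 fun i => (v i)⁺ + δ
  have hyv : ∀ i, (-v +ᵥ y) i = (v i)⁻ + δ := fun i => by
    simp only [vadd_eq_add, PiLp.add_apply, PiLp.neg_apply, y]
    linarith [posPart_sub_negPart (v i)]
  rw [interior_vadd, Set.not_disjoint_iff]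
  refine ⟨y, mem_interior_stdTetrahedron (fun i => ?_) ?_,
    Set.mem_vadd_set_iff_neg_vadd_mem.2 (mem_interior_stdTetrahedron (fun i => ?_) ?_)⟩
  · simp only [y]; positivity
  · simp only [y, Fin.sum_univ_three] at hδpos ⊢
    linarith
  · rw [hyv]; positivity
  · simp only [hyv, Fin.sum_univ_three] at hδneg ⊢
    linarith

lemma exists_int_sum_posPart_lt_one_of_monotone {g : Fin 3 → ℝ} (hg : Monotone g)
    (h0 : 0 ≤ g 0) (h2 : g 2 < 1) (hhalf : ∃ i, g i ≠ 1 / 2) :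
    ∃ m : Fin 3 → ℤ, ∑ i, (g i - m i)⁺ < 1 ∧ ∑ i, (g i - m i)⁻ < 1 := by
  have h01 : g 0 ≤ g 1 := hg (by decide)
  have h12 : g 1 ≤ g 2 := hg (by decide)
  rcases lt_or_ge (g 0 + g 1 + g 2) 1 with h | h
  · refine ⟨![0, 0, 0], ?_, ?_⟩ <;>
      simp only [Fin.sum_univ_three, Matrix.cons_val_zero, Matrix.cons_val_one, Matrix.cons_val,
        Int.cast_zero, sub_zero, posPart, negPart, max_def] <;>
      split_ifs <;> linarith
  rcases lt_or_ge (g 0 + g 1) 1 with h' | h'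
  · refine ⟨![0, 0, 1], ?_, ?_⟩ <;>
      simp only [Fin.sum_univ_three, Matrix.cons_val_zero, Matrix.cons_val_one, Matrix.cons_val,
        Int.cast_zero, Int.cast_one, sub_zero, posPart, negPart, max_def] <;>
      split_ifs <;> linarith
  rcases lt_or_ge 1 (g 1 + g 2) with h'' | h''
  · refine ⟨![0, 1, 1], ?_, ?_⟩ <;>
      simp only [Fin.sum_univ_three, Matrix.cons_val_zero, Matrix.cons_val_one, Matrix.cons_val,
        Int.cast_zero, Int.cast_one, sub_zero, posPart, negPart, max_def] <;>
      split_ifs <;> linarith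
  obtain ⟨i, hi⟩ := hhalf
  fin_cases i <;> simp at hi <;> exact absurd (by linarith) hi

lemma exists_int_sum_posPart_lt_one (x : Fin 3 → ℝ) (hx : ∃ i, Int.fract (x i) ≠ 1 / 2) :
    ∃ m : Fin 3 → ℤ, ∑ i, (x i - m i)⁺ < 1 ∧ ∑ i, (x i - m i)⁻ < 1 := by
  set σ := Tuple.sort fun i => Int.fract (x i)
  obtain ⟨i, hi⟩ := hx
  obtain ⟨m, hpos, hneg⟩ := exists_int_sum_posPart_lt_one_of_monotone
    (Tuple.monotone_sort fun i => Int.fract (x i)) (Int.fract_nonneg _) (Int.fract_lt_one _)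
    ⟨σ.symm i, by simpa [σ] using hi⟩
  refine ⟨fun i => ⌊x i⌋ + m (σ.symm i), ?_, ?_⟩
  · rw [← Equiv.sum_comp σ]
    simpa [sub_add_eq_sub_sub] using hpos
  · rw [← Equiv.sum_comp σ]
    simpa [sub_add_eq_sub_sub] using hneg

lemma AddSubgroup.relIndex_eq_one_or_two_of_sub_mem {G : Type*} [AddGroup G]
    {H K : AddSubgroup G} (h : ∀ a ∈ K, ∀ b ∈ K, a ∉ H → b ∉ H → a - b ∈ H) :
    H.relIndex K = 1 ∨ H.relIndex K = 2 := by
  by_cases hKH : K ≤ H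
  · exact Or.inl (AddSubgroup.relIndex_eq_one.2 hKH)
  obtain ⟨a, haK, haH⟩ := Set.not_subset.1 hKH
  refine Or.inr (AddSubgroup.relIndex_eq_two_iff_exists_notMem_and.2 ⟨a, haK, haH, fun b hb => ?_⟩)
  by_cases hbH : b ∈ H
  · exact Or.inr hbH
  · left
    simpa using h b hb (-a) (neg_mem haK) hbH (by simpa using haH)

lemma fract_apply_eq_half_of_mem {Λ' : Submodule ℤ ℝ³} (hle : intLattice ≤ Λ')
    (h : ∀ s ∈ Λ', ∀ t ∈ Λ', s ≠ t →
      Disjoint (interior (s +ᵥ stdTetrahedron)) (interior (t +ᵥ stdTetrahedron)))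
    {v : ℝ³} (hv : v ∈ Λ') (hvZ : v ∉ intLattice) (i : Fin 3) : Int.fract (v i) = 1 / 2 := by
  revert i
  by_contra! hx
  obtain ⟨m, hpos, hneg⟩ := exists_int_sum_posPart_lt_one v hx
  set z : ℝ³ := WithLp.toLp 2 fun i => (m i : ℝ)
  have hz : z ∈ intLattice := (mem_intLattice_iff z).2 fun i => ⟨m i, rfl⟩
  have hne : 0 ≠ v - z := fun h0 => hvZ (sub_eq_zero.1 h0.symm ▸ hz)
  have hdisj := h 0 (zero_mem _) (v - z) (sub_mem hv (hle hz)) hne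
  rw [zero_vadd] at hdisj
  exact not_disjoint_interior_stdTetrahedron_vadd (by simpa [z] using hpos)
    (by simpa [z] using hneg) hdisj

theorem stmt_10_general (Λ' : Submodule ℤ (EuclideanSpace ℝ (Fin 3)))
    (hle : intLattice ≤ Λ')
    (h : ∀ s ∈ Λ', ∀ t ∈ Λ', s ≠ t →
      Disjoint (interior (s +ᵥ stdTetrahedron)) (interior (t +ᵥ stdTetrahedron))) :
    intLattice.toAddSubgroup.relIndex Λ'.toAddSubgroup ≠ 0 ∧
      intLattice.toAddSubgroup.relIndex Λ'.toAddSubgroup ≤ 2 := by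
  have hsub : ∀ v ∈ Λ'.toAddSubgroup, ∀ w ∈ Λ'.toAddSubgroup, v ∉ intLattice.toAddSubgroup →
      w ∉ intLattice.toAddSubgroup → v - w ∈ intLattice.toAddSubgroup := by
    intro v hv w hw hvZ hwZ
    refine (mem_intLattice_iff _).2 fun i => ?_
    obtain ⟨n, hn⟩ := Int.fract_eq_fract.1 ((fract_apply_eq_half_of_mem hle h hv hvZ i).trans
      (fract_apply_eq_half_of_mem hle h hw hwZ i).symm)
    exact ⟨n, by simpa using hn⟩
  have := AddSubgroup.relIndex_eq_one_or_two_of_sub_mem hsub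
  omega

/-- If `Λ'` is a full-rank lattice in `ℝ³` containing `ℤ³` such that the translates of the
standard tetrahedron `D` by the vectors of `Λ'` have pairwise disjoint interiors, then the
index `[Λ' : ℤ³]` is (finite and) at most `2`. -/
theorem stmt_10 (Λ' : Submodule ℤ (EuclideanSpace ℝ (Fin 3)))
    [DiscreteTopology Λ'] [IsZLattice ℝ Λ']
    (hle : intLattice ≤ Λ')
    (h : ∀ s ∈ Λ', ∀ t ∈ Λ', s ≠ t →
      Disjoint (interior (s +ᵥ stdTetrahedron)) (interior (t +ᵥ stdTetrahedron))) :
    intLattice.toAddSubgroup.relIndex Λ'.toAddSubgroup ≠ 0 ∧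
      intLattice.toAddSubgroup.relIndex Λ'.toAddSubgroup ≤ 2 :=
  stmt_10_general Λ' hle h
end
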